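/- Let t_r denote the number of transitive pairs (σ,τ) ∈ S_r × S_r, so that h_r := t_r/(r−1)! is the total number of rooted hypermaps with r darts. Then for every r ≥ 1, h_r = r · r! − Σ_{k=1}^{r−1} k! · h_{r−k}. -/

import Mathlib

open Finset

/-- A pair of permutations is transitive if the subgroup they generate acts
transitively on `Fin r`. -/
def IsTransitivePair {r : ℕ} (σ τ : Equiv.Perm (Fin r)) : Prop :=
  ∀ x y : Fin r, ∃ g ∈ Subgroup.closure ({σ, τ} : Set (Equiv.Perm (Fin r))), g x = y

/-- `t_r`: the number of transitive pairs `(σ,τ) ∈ S_r × S_r`. -/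
noncomputable def transPairs (r : ℕ) : ℕ :=
  Nat.card {p : Equiv.Perm (Fin r) × Equiv.Perm (Fin r) // IsTransitivePair p.1 p.2}

/-- `h_r = t_r/(r-1)!`: the total number of rooted hypermaps with `r` darts. -/
noncomputable def totalHypermaps (r : ℕ) : ℚ :=
  (transPairs r : ℚ) / (r - 1).factorial

/-!
Sort the pairs `(σ, τ) ∈ S_r × S_r` by the orbit `A ∋ 0` of the group they generate. Both
permutations preserve `A`, so such a pair is a transitive pair of permutations of `A` together
with an arbitrary pair of permutations of its complement, and there are `t_{|A|} ((r - |A|)!)²`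
of them. Counting all `(r!)²` pairs this way gives `(r!)² = Σ_m C(r-1, m-1) t_m ((r-m)!)²`;
dividing by `(r-1)!` turns this into `r · r! = Σ_{k=0}^{r-1} k! h_{r-k}`, whose `k = 0` term
is `h_r`.
-/

open Equiv MulAction

theorem Subgroup.closure_pair_map {G H : Type*} [Group G] [Group H] (f : G →* H) (g₁ g₂ : G) :
    closure {f g₁, f g₂} = (closure {g₁, g₂}).map f := by
  rw [MonoidHom.map_closure, Set.image_pair]

theorem MulAction.smul_mem_orbit_iff {G α : Type*} [Group G] [MulAction G α] (g : G) {x a : α} :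
    g • x ∈ orbit G a ↔ x ∈ orbit G a := by
  rw [← orbit_eq_iff, orbit_smul, orbit_eq_iff]

theorem MulAction.isPretransitive_iff_forall_orbit_eq_univ {G α : Type*} [Group G]
    [MulAction G α] : IsPretransitive G α ↔ ∀ x : α, orbit G x = Set.univ :=
  ⟨fun _ => orbit_eq_univ G, fun h => ⟨fun x y => mem_orbit_iff.1 (h x ▸ Set.mem_univ y)⟩⟩

theorem orbit_map_eq_image {G α β : Type*} [Group G] (u : G →* Perm α) (v : G →* Perm β)
    {j : α → β} (hj : ∀ g x, j (u g x) = v g (j x)) (K : Subgroup G) (x : α) :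
    orbit (K.map v) (j x) = j '' orbit (K.map u) x := by
  ext y
  simp only [Set.mem_image, mem_orbit_iff, Subtype.exists, Subgroup.mk_smul, Perm.smul_def,
    Subgroup.mem_map]
  constructor
  · rintro ⟨_, ⟨g, hg, rfl⟩, rfl⟩
    exact ⟨u g x, ⟨u g, ⟨g, hg, rfl⟩, rfl⟩, hj g x⟩
  · rintro ⟨_, ⟨_, ⟨g, hg, rfl⟩, rfl⟩, rfl⟩
    exact ⟨v g, ⟨g, hg, rfl⟩, (hj g x).symm⟩

theorem isTransitivePair_iff {r : ℕ} (σ τ : Perm (Fin r)) :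
    IsTransitivePair σ τ ↔ IsPretransitive (Subgroup.closure {σ, τ}) (Fin r) := by
  simp only [IsTransitivePair, isPretransitive_iff, Subtype.exists, Subgroup.mk_smul,
    Perm.smul_def, exists_prop]

theorem isPretransitive_closure_permCongr_iff {α β : Type*} (e : α ≃ β) (σ τ : Perm α) :
    IsPretransitive (Subgroup.closure {e.permCongr σ, e.permCongr τ}) β ↔
      IsPretransitive (Subgroup.closure {σ, τ}) α := by
  have horbit (x : α) : orbit (Subgroup.closure {e.permCongr σ, e.permCongr τ}) (e x) =
      e '' orbit (Subgroup.closure {σ, τ}) x := by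
    rw [← permCongrHom_coe, ← MonoidHom.coe_coe, Subgroup.closure_pair_map,
      orbit_map_eq_image (MonoidHom.id _), Subgroup.map_id]
    simp
  simp only [isPretransitive_iff_forall_orbit_eq_univ, ← e.forall_congr_right, horbit,
    e.injective.image_injective.eq_iff' (Set.image_univ_of_surjective e.surjective)]

theorem card_isPretransitive_closure_pair_eq_transPairs {β : Type*} [Fintype β] :
    Nat.card {w : Perm β × Perm β // IsPretransitive (Subgroup.closure {w.1, w.2}) β} =
      transPairs (Fintype.card β) := by
  let e := Fintype.equivFin β
  refine Nat.card_congr (Equiv.subtypeEquiv (e.permCongr.prodCongr e.permCongr) fun w => ?_)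
  rw [← isPretransitive_closure_permCongr_iff e, isTransitivePair_iff]
  rfl

section SubtypeCongr

variable {α : Type*} {p : α → Prop}

theorem apply_mem_iff_of_orbit_eq {K : Subgroup (Perm α)} {a : α}
    (horbit : orbit K a = {x | p x}) {ρ : Perm α} (hρ : ρ ∈ K) (x : α) : p (ρ x) ↔ p x := by
  simpa [horbit] using smul_mem_orbit_iff (⟨ρ, hρ⟩ : K) (x := x) (a := a)

variable [DecidablePred p]

theorem Equiv.Perm.subtypeCongr_subtypePerm (σ : Perm α) (h : ∀ x, p (σ x) ↔ p x) :
    (σ.subtypePerm h).subtypeCongr (σ.subtypePerm fun x => not_congr (h x)) = σ := by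
  ext x
  by_cases hx : p x
  · simp [Perm.subtypeCongr.left_apply _ _ hx]
  · simp [Perm.subtypeCongr.right_apply _ _ hx]

theorem orbit_closure_subtypeCongrHom_eq_iff (q₁ q₂ : Perm {x // p x} × Perm {x // ¬p x})
    {a : α} (ha : p a) :
    orbit (Subgroup.closure {Perm.subtypeCongrHom p q₁, Perm.subtypeCongrHom p q₂}) a =
        {x | p x} ↔ IsPretransitive (Subgroup.closure {q₁.1, q₂.1}) {x // p x} := by
  have hj (q : Perm {x // p x} × Perm {x // ¬p x}) (x : {x // p x}) :
      (MonoidHom.fst _ _ q x : α) = Perm.subtypeCongrHom p q x := by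
    simp [Perm.subtypeCongr.left_apply_subtype]
  have horbit := orbit_map_eq_image _ _ hj (Subgroup.closure {q₁, q₂}) ⟨a, ha⟩
  rw [← Subgroup.closure_pair_map, ← Subgroup.closure_pair_map] at horbit
  rw [isPretransitive_iff_orbit_eq_univ ⟨a, ha⟩, ← Subtype.range_coe_subtype, ← Set.image_univ,
    ← (Set.image_injective.2 Subtype.val_injective).eq_iff]
  exact Eq.congr_left horbit

theorem card_pairs_with_orbit_eq {a : α} (ha : p a) :
    Nat.card {s : Perm α × Perm α // orbit (Subgroup.closure {s.1, s.2}) a = {x | p x}} =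
      Nat.card {w : Perm {x // p x} × Perm {x // p x} //
          IsPretransitive (Subgroup.closure {w.1, w.2}) {x // p x}} *
        Nat.card (Perm {x // ¬p x}) ^ 2 := by
  let join (w : {w : Perm {x // p x} × Perm {x // p x} //
        IsPretransitive (Subgroup.closure {w.1, w.2}) {x // p x}} ×
      (Perm {x // ¬p x} × Perm {x // ¬p x})) :
      {s : Perm α × Perm α // orbit (Subgroup.closure {s.1, s.2}) a = {x | p x}} :=
    ⟨(Perm.subtypeCongrHom p (w.1.1.1, w.2.1), Perm.subtypeCongrHom p (w.1.1.2, w.2.2)),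
      (orbit_closure_subtypeCongrHom_eq_iff _ _ ha).2 w.1.2⟩
  have hinj : Function.Injective join := by
    rintro ⟨⟨⟨w₁, w₂⟩, _⟩, v₁, v₂⟩ ⟨⟨⟨w₁', w₂'⟩, _⟩, v₁', v₂'⟩ h
    obtain ⟨h₁, h₂⟩ := Prod.mk.inj (Subtype.mk.inj h)
    obtain ⟨rfl, rfl⟩ := Prod.mk.inj (Perm.subtypeCongrHom_injective p h₁)
    obtain ⟨rfl, rfl⟩ := Prod.mk.inj (Perm.subtypeCongrHom_injective p h₂)
    rfl
  have hsurj : Function.Surjective join := by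
    rintro ⟨⟨σ, τ⟩, horbit⟩
    have hσ := apply_mem_iff_of_orbit_eq horbit (Subgroup.subset_closure (Set.mem_insert σ _))
    have hτ := apply_mem_iff_of_orbit_eq horbit
      (Subgroup.subset_closure (Set.mem_insert_of_mem _ (Set.mem_singleton τ)))
    let q₁ := (σ.subtypePerm hσ, σ.subtypePerm (p := (¬p ·)) fun x => not_congr (hσ x))
    let q₂ := (τ.subtypePerm hτ, τ.subtypePerm (p := (¬p ·)) fun x => not_congr (hτ x))
    have hq₁ : Perm.subtypeCongrHom p q₁ = σ := Perm.subtypeCongr_subtypePerm σ hσ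
    have hq₂ : Perm.subtypeCongrHom p q₂ = τ := Perm.subtypeCongr_subtypePerm τ hτ
    have htrans := (orbit_closure_subtypeCongrHom_eq_iff q₁ q₂ ha).1 (by rwa [hq₁, hq₂])
    exact ⟨⟨⟨(q₁.1, q₂.1), htrans⟩, (q₁.2, q₂.2)⟩, Subtype.ext (Prod.ext hq₁ hq₂)⟩
  rw [← Nat.card_congr (Equiv.ofBijective join ⟨hinj, hsurj⟩), Nat.card_prod, Nat.card_prod, sq]

end SubtypeCongr

theorem card_perm_sq_eq_sum_orbit {α : Type*} [Fintype α] [DecidableEq α] (a : α) :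
    (Fintype.card α).factorial ^ 2 =
      ∑ A ∈ univ with a ∈ A, transPairs #A * (Fintype.card α - #A).factorial ^ 2 := by
  classical
  let orbitFinset (s : Perm α × Perm α) := (orbit (Subgroup.closure {s.1, s.2}) a).toFinset
  have hmaps (s) (_ : s ∈ univ) : orbitFinset s ∈ univ.filter (a ∈ ·) := by
    simp [orbitFinset, mem_orbit_self]
  rw [← Fintype.card_perm, sq, ← Fintype.card_prod, ← card_univ,
    card_eq_sum_card_fiberwise hmaps]
  refine sum_congr rfl fun A hA => ?_
  have hfiber : #{s | orbitFinset s = A} =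
      Nat.card {s : Perm α × Perm α // orbit (Subgroup.closure {s.1, s.2}) a = {x | x ∈ A}} := by
    rw [Nat.card_eq_fintype_card, ← Fintype.card_subtype]
    exact Fintype.card_congr (Equiv.subtypeEquivRight fun s => by simp [orbitFinset, ← coe_inj])
  rw [hfiber, card_pairs_with_orbit_eq (mem_filter.1 hA).2,
    card_isPretransitive_closure_pair_eq_transPairs, Nat.card_eq_fintype_card, Fintype.card_perm,
    Fintype.card_subtype_compl, Fintype.card_coe]

theorem Finset.sum_filter_mem_eq_sum_powerset_erase {α M : Type*} [Fintype α] [DecidableEq α]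
    [AddCommMonoid M] (a : α) (f : Finset α → M) :
    ∑ A ∈ univ with a ∈ A, f A = ∑ B ∈ (univ.erase a).powerset, f (insert a B) := by
  refine sum_nbij' (·.erase a) (insert a) (fun A _ => ?_) (fun B _ => ?_) (fun A hA => ?_)
    (fun B hB => ?_) (fun A hA => ?_)
  · simpa using erase_subset_erase a (subset_univ A)
  · simp
  · exact insert_erase (mem_filter.1 hA).2
  · exact erase_insert fun h => by simpa using mem_powerset.1 hB h
  · rw [insert_erase (mem_filter.1 hA).2]

theorem factorial_sq_eq_sum_transPairs (n : ℕ) :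
    (n + 1).factorial ^ 2 =
      ∑ m ∈ range (n + 1), n.choose m * (transPairs (m + 1) * (n - m).factorial ^ 2) := by
  have h := card_perm_sq_eq_sum_orbit (0 : Fin (n + 1))
  have hcard : #(univ.erase (0 : Fin (n + 1))) = n := by simp
  rw [sum_filter_mem_eq_sum_powerset_erase, Fintype.card_fin] at h
  calc (n + 1).factorial ^ 2
      = ∑ B ∈ (univ.erase (0 : Fin (n + 1))).powerset,
          transPairs (#B + 1) * (n - #B).factorial ^ 2 := by
        rw [h]
        refine sum_congr rfl fun B hB => ?_
        rw [card_insert_of_notMem fun h => by simpa using mem_powerset.1 hB h,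
          Nat.add_sub_add_right]
    _ = _ := by
        rw [sum_powerset_apply_card (fun m => transPairs (m + 1) * (n - m).factorial ^ 2), hcard]
        rfl

theorem succ_mul_factorial_eq_sum_totalHypermaps (n : ℕ) :
    ((n + 1 : ℕ) : ℚ) * (n + 1).factorial =
      ∑ m ∈ range (n + 1), ((n - m).factorial : ℚ) * totalHypermaps (m + 1) := by
  refine mul_right_cancel₀ (by positivity : (n.factorial : ℚ) ≠ 0) ?_
  calc ((n + 1 : ℕ) : ℚ) * (n + 1).factorial * n.factorial
      = (((n + 1).factorial ^ 2 : ℕ) : ℚ) := by push_cast [Nat.factorial_succ]; ring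
    _ = _ := by
      rw [factorial_sq_eq_sum_transPairs, Nat.cast_sum, sum_mul]
      refine sum_congr rfl fun m hm => ?_
      have hchoose : (n.choose m * m.factorial * (n - m).factorial : ℚ) = n.factorial := by
        exact_mod_cast Nat.choose_mul_factorial_mul_factorial (Nat.lt_succ_iff.1 (mem_range.1 hm))
      have : (m.factorial : ℚ) ≠ 0 := by positivity
      rw [totalHypermaps, Nat.add_sub_cancel, ← hchoose]
      push_cast
      field_simp

theorem sum_range_factorial_mul_totalHypermaps (n : ℕ) :
    ∑ k ∈ range (n + 1), (k.factorial : ℚ) * totalHypermaps (n + 1 - k) =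
      ((n + 1 : ℕ) : ℚ) * (n + 1).factorial := by
  rw [succ_mul_factorial_eq_sum_totalHypermaps, ← sum_range_reflect]
  refine sum_congr rfl fun m hm => ?_
  have hm : m ≤ n := Nat.lt_succ_iff.1 (mem_range.1 hm)
  rw [Nat.add_sub_cancel, show n + 1 - (n - m) = m + 1 by omega]

/-- The total number of rooted hypermaps with `r` darts satisfies
`h_r = r·r! - Σ_{k=1}^{r-1} k! · h_{r-k}`. -/
theorem totalHypermaps_recursion (r : ℕ) (hr : 1 ≤ r) :
    totalHypermaps r =
      (r : ℚ) * (r.factorial : ℚ) -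
        ∑ k ∈ Finset.Icc 1 (r - 1), (k.factorial : ℚ) * totalHypermaps (r - k) := by
  obtain ⟨n, rfl⟩ := Nat.exists_eq_add_of_le' hr
  rw [← sum_range_factorial_mul_totalHypermaps, range_eq_Ico,
    sum_eq_sum_Ico_succ_bot (by omega : 0 < n + 1), Ico_add_one_right_eq_Icc, Nat.add_sub_cancel]
  simp
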